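/- arXiv:1711.02931 — 2 statements merged into one kernel-verified Lean document; each statement's English description precedes it below -/
import Mathlib

section
/- Let S ≥ 1 and fix nonnegative reals σ, D, τ. Define φ on ordered nonnegative vectors u (u(1) ≤ ... ≤ u(S)) coordinatewise by φ(u)(i) = [min(max(u(i), u(1) + σ·1_{u(1) ≤ D}), u(i+1)) − τ]⁺ for i < S and φ(u)(S) = [max(u(S), u(1) + σ·1_{u(1) ≤ D}) − τ]⁺, and define φ̄ by φ̄(u)(i) = [min(max(u(i), σ + D), u(i+1)) − τ]⁺ for i < S and φ̄(u)(S) = [max(u(S), σ + D) − τ]⁺. Then for any ordered nonnegative vectors u, v and any index i ∈ {1,...,S}, if u(j) ≤ v(j) for all j ∈ {i,...,S}, then φ(u)(j) ≤ φ̄(v)(j) for all j ∈ {i,...,S}. -/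
/-- Positive part `[x]⁺ = max (x, 0)`. -/
noncomputable def pos (x : ℝ) : ℝ := max x 0

/-- The workload update map `φ` (indices `1,…,S`). -/
noncomputable def phi (S : ℕ) (σ D τ : ℝ) (u : ℕ → ℝ) (i : ℕ) : ℝ :=
  if i < S then
    pos (min (max (u i) (u 1 + σ * (if u 1 ≤ D then (1 : ℝ) else 0))) (u (i + 1)) - τ)
  else
    pos (max (u S) (u 1 + σ * (if u 1 ≤ D then (1 : ℝ) else 0)) - τ)

/-- The upper-bounding map `φ̄`. -/
noncomputable def phiBar (S : ℕ) (σ D τ : ℝ) (u : ℕ → ℝ) (i : ℕ) : ℝ :=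
  if i < S then pos (min (max (u i) (σ + D)) (u (i + 1)) - τ)
  else pos (max (u S) (σ + D) - τ)

/-- The lower-bounding map `φ̲`. -/
noncomputable def phiUnder (S : ℕ) (σ D τ : ℝ) (u : ℕ → ℝ) (i : ℕ) : ℝ :=
  if i < S then pos (min (max (u i) (min σ D)) (u (i + 1)) - τ)
  else pos (max (u S) (min σ D) - τ)

/-- `u` is an ordered nonnegative vector on coordinates `1,…,S`. -/
def OrderedNonneg (S : ℕ) (u : ℕ → ℝ) : Prop :=
  (∀ i, 1 ≤ i → i ≤ S → 0 ≤ u i) ∧ (∀ i, 1 ≤ i → i < S → u i ≤ u (i + 1))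

theorem stmt_2 (S : ℕ) (hS : 1 ≤ S) (σ D τ : ℝ) (hσ : 0 ≤ σ) (hD : 0 ≤ D) (hτ : 0 ≤ τ)
    (u v : ℕ → ℝ) (hu : OrderedNonneg S u) (hv : OrderedNonneg S v)
    (i : ℕ) (hi1 : 1 ≤ i) (hiS : i ≤ S)
    (hcomp : ∀ j, i ≤ j → j ≤ S → u j ≤ v j) :
    ∀ j, i ≤ j → j ≤ S → phi S σ D τ u j ≤ phiBar S σ D τ v j := by
  have hmono : ∀ j, 1 ≤ j → j ≤ S → u 1 ≤ u j := by
    intro j hj1 hjS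
    induction j with
    | zero => omega
    | succ n ih =>
      rcases Nat.eq_or_lt_of_le hj1 with h | h
      · simp [← h]
      · have hn1 : 1 ≤ n := by omega
        exact le_trans (ih hn1 (by omega)) (hu.2 n hn1 (by omega))
  have key : ∀ j, i ≤ j → j ≤ S →
      max (u j) (u 1 + σ * (if u 1 ≤ D then (1 : ℝ) else 0)) ≤ max (v j) (σ + D) := by
    intro j hij hjS
    by_cases h1 : u 1 ≤ D
    · simp only [h1, if_pos, mul_one]
      exact max_le_max (hcomp j hij hjS) (by linarith)
    · simp only [h1, if_neg, not_false_iff, mul_zero, add_zero]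
      have : u 1 ≤ u j := hmono j (by omega) hjS
      have : max (u j) (u 1) = u j := max_eq_left this
      rw [this]
      exact le_trans (hcomp j hij hjS) (le_max_left _ _)
  intro j hij hjS
  unfold phi phiBar pos
  by_cases hjlt : j < S
  · simp only [hjlt, if_pos]
    apply max_le_max _ le_rfl
    apply sub_le_sub_right
    exact min_le_min (key j hij hjS) (hcomp (j+1) (by omega) (by omega))
  · simp only [hjlt, if_neg, not_false_iff]
    apply max_le_max _ le_rfl
    apply sub_le_sub_right
    exact key S (by omega) le_rfl
end

section
/- Let S ≥ 1 and fix nonnegative reals σ, D, τ. Define φ on ordered nonnegative vectors by φ(u)(i) = [min(max(u(i), u(1) + σ·1_{u(1) ≤ D}), u(i+1)) − τ]⁺ for i < S and φ(u)(S) = [max(u(S), u(1) + σ·1_{u(1) ≤ D}) − τ]⁺, and define φ̲ by φ̲(u)(i) = [min(max(u(i), min(σ, D)), u(i+1)) − τ]⁺ for i < S and φ̲(u)(S) = [max(u(S), min(σ, D)) − τ]⁺. Then for any ordered nonnegative vectors u, v and any index i ∈ {1,...,S}, if u(j) ≤ v(j) for all j ∈ {i,...,S}, then φ̲(u)(j)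 ≤ φ(v)(j) for all j ∈ {i,...,S}. -/
theorem stmt_3 (S : ℕ) (hS : 1 ≤ S) (σ D τ : ℝ) (hσ : 0 ≤ σ) (hD : 0 ≤ D) (hτ : 0 ≤ τ)
    (u v : ℕ → ℝ) (hu : OrderedNonneg S u) (hv : OrderedNonneg S v)
    (i : ℕ) (hi1 : 1 ≤ i) (hiS : i ≤ S)
    (hcomp : ∀ j, i ≤ j → j ≤ S → u j ≤ v j) :
    ∀ j, i ≤ j → j ≤ S → phiUnder S σ D τ u j ≤ phi S σ D τ v j := by
  intro j hij hjS
  have hv1 : (0:ℝ) ≤ v 1 := hv.1 1 le_rfl hS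
  have hkey : min σ D ≤ v 1 + σ * (if v 1 ≤ D then (1:ℝ) else 0) := by
    split_ifs with h
    · calc min σ D ≤ σ := min_le_left _ _
        _ ≤ v 1 + σ * 1 := by linarith
    · calc min σ D ≤ D := min_le_right _ _
        _ ≤ v 1 + σ * 0 := by push_neg at h; linarith
  have hmax : ∀ k, i ≤ k → k ≤ S →
      max (u k) (min σ D) ≤ max (v k) (v 1 + σ * (if v 1 ≤ D then (1:ℝ) else 0)) := by
    intro k hk1 hk2
    exact max_le_max (hcomp k hk1 hk2) hkey
  unfold phiUnder phi pos
  by_cases h : j < S <;> simp only [h, if_true, if_false]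
  · have h1 : u (j+1) ≤ v (j+1) := hcomp (j+1) (le_trans hij (Nat.le_succ j)) h
    exact max_le_max (by have := hmax j hij hjS; linarith [min_le_min this h1]) le_rfl
  · exact max_le_max (by have := hmax S (le_of_not_gt (by omega)) le_rfl; linarith) le_rfl
end
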